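/- arXiv:1704.07375 — 3 statements merged into one kernel-verified Lean document; each statement's English description precedes it below -/
import Mathlib

section
/- For any two nonzero orthogonal projection operators Π₀ and Π₁ on ℂ^r, the operator norm of their sum equals 1 plus the operator norm of their product: ‖Π₀ + Π₁‖ = 1 + ‖Π₀Π₁‖. -/
/-!
Let `S = P + Q` and `c = ‖P Q‖`. For any `x`, put `a = P x`, `b = Q x`. Then
`re ⟪a + b, x⟫ = ‖a‖² + ‖b‖²` and `⟪a, b⟫ = ⟪a, P Q b⟫`, so
`‖S x‖² ≤ ‖a‖² + ‖b‖² + 2 c ‖a‖ ‖b‖ ≤ (1 + c) ‖S x‖ ‖x‖`, whence `‖S‖ ≤ 1 + c`.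
Conversely, for `u ∈ range Q` and `w ∈ range P` the test vector `v = ‖w‖ u + ‖u‖ w` satisfies
`‖P v‖, ‖Q v‖ ≥ t` and `‖v‖² = 2 ‖u‖ ‖w‖ t`, where `t = ‖u‖ ‖w‖ + re ⟪u, w⟫`, so
`re ⟪S v, v⟫ = ‖P v‖² + ‖Q v‖²` forces `t ≤ ‖S‖ ‖u‖ ‖w‖`. Taking `u = Q x` and `w = P Q x`
gives `‖P Q x‖ ≤ (‖S‖ - 1) ‖Q x‖`, i.e. `1 + c ≤ ‖S‖`.
-/

open scoped InnerProductSpace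
open RCLike

theorem ContinuousLinearMap.re_inner_apply_self_le {𝕜 E : Type*} [RCLike 𝕜]
    [NormedAddCommGroup E] [InnerProductSpace 𝕜 E] (T : E →L[𝕜] E) (x : E) :
    re ⟪T x, x⟫_𝕜 ≤ ‖T‖ * ‖x‖ ^ 2 :=
  calc re ⟪T x, x⟫_𝕜 ≤ ‖T x‖ * ‖x‖ := re_inner_le_norm _ _
    _ ≤ ‖T‖ * ‖x‖ * ‖x‖ := by gcongr; exact T.le_opNorm x
    _ = ‖T‖ * ‖x‖ ^ 2 := by ring

namespace IsStarProjection

variable {𝕜 E : Type*} [RCLike 𝕜] [NormedAddCommGroup E] [InnerProductSpace 𝕜 E] [CompleteSpace E]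
  {P Q : E →L[𝕜] E}

theorem apply_apply (hP : IsStarProjection P) (x : E) : P (P x) = P x :=
  congr($(hP.isIdempotentElem.eq) x)

theorem inner_apply_left (hP : IsStarProjection P) (v w : E) : ⟪P v, w⟫_𝕜 = ⟪v, P w⟫_𝕜 :=
  hP.isSelfAdjoint.isSymmetric v w

theorem inner_apply_self (hP : IsStarProjection P) (x : E) :
    ⟪P x, x⟫_𝕜 = (‖P x‖ : 𝕜) ^ 2 := by
  rw [← inner_self_eq_norm_sq_to_K, ← hP.inner_apply_left, hP.apply_apply]

theorem re_inner_apply_self (hP : IsStarProjection P) (x : E) :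
    re ⟪P x, x⟫_𝕜 = ‖P x‖ ^ 2 := by
  rw [hP.inner_apply_self]; norm_cast

theorem norm_add_le_one_add_norm_comp (hP : IsStarProjection P) (hQ : IsStarProjection Q) :
    ‖P + Q‖ ≤ 1 + ‖P ∘L Q‖ := by
  refine (P + Q).opNorm_le_bound (by positivity) fun x ↦ ?_
  set a := P x
  set b := Q x
  have hs : re ⟪a + b, x⟫_𝕜 = ‖a‖ ^ 2 + ‖b‖ ^ 2 := by
    rw [inner_add_left, map_add, hP.re_inner_apply_self, hQ.re_inner_apply_self]
  have hab : re ⟪a, b⟫_𝕜 ≤ ‖P ∘L Q‖ * (‖a‖ * ‖b‖) := by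
    have : ⟪a, b⟫_𝕜 = ⟪a, (P ∘L Q) b⟫_𝕜 := by
      simp only [a, b, ContinuousLinearMap.comp_apply, hQ.apply_apply, ← hP.inner_apply_left,
        hP.apply_apply]
    calc re ⟪a, b⟫_𝕜 ≤ ‖a‖ * ‖(P ∘L Q) b‖ := this ▸ re_inner_le_norm _ _
      _ ≤ ‖a‖ * (‖P ∘L Q‖ * ‖b‖) := by gcongr; exact (P ∘L Q).le_opNorm b
      _ = _ := by ring
  have hsq : ‖a + b‖ ^ 2 ≤ (1 + ‖P ∘L Q‖) * ‖a + b‖ * ‖x‖ :=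
    calc ‖a + b‖ ^ 2 = ‖a‖ ^ 2 + 2 * re ⟪a, b⟫_𝕜 + ‖b‖ ^ 2 := norm_add_sq _ _
      _ ≤ (1 + ‖P ∘L Q‖) * (‖a‖ ^ 2 + ‖b‖ ^ 2) := by
        nlinarith [sq_nonneg (‖a‖ - ‖b‖), norm_nonneg (P ∘L Q)]
      _ ≤ (1 + ‖P ∘L Q‖) * (‖a + b‖ * ‖x‖) := by
        gcongr; exact hs ▸ re_inner_le_norm _ _
      _ = _ := by ring
  show ‖a + b‖ ≤ _
  by_contra! h
  nlinarith [mul_pos (sub_pos.2 h) (lt_of_le_of_lt (by positivity) h)]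

theorem norm_mul_norm_add_re_inner_le (hP : IsStarProjection P) (hQ : IsStarProjection Q)
    {u w : E} (hu : Q u = u) (hw : P w = w) :
    ‖u‖ * ‖w‖ + re ⟪u, w⟫_𝕜 ≤ ‖P + Q‖ * (‖u‖ * ‖w‖) := by
  set α := ‖u‖
  set β := ‖w‖
  set t := α * β + re ⟪u, w⟫_𝕜
  rcases le_or_gt t 0 with ht | ht
  · exact ht.trans (by positivity)
  have hαβ : 0 < α * β := by linarith [re_inner_le_norm (𝕜 := 𝕜) u w]
  have hα : 0 < α := pos_of_mul_pos_left hαβ (norm_nonneg w)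
  have hβ : 0 < β := pos_of_mul_pos_right hαβ (norm_nonneg u)
  set v := (β : 𝕜) • u + (α : 𝕜) • w
  have hvw : re ⟪v, w⟫_𝕜 = β * t := by
    simp only [v, t, inner_add_left, inner_smul_left, inner_self_eq_norm_sq_to_K, conj_ofReal,
      map_add, re_ofReal_mul]
    norm_cast; ring
  have hvu : re ⟪v, u⟫_𝕜 = α * t := by
    simp only [v, t, inner_add_left, inner_smul_left, inner_self_eq_norm_sq_to_K, conj_ofReal,
      map_add, re_ofReal_mul, inner_re_symm (𝕜 := 𝕜) w u]
    norm_cast; ring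
  have hvv : ‖v‖ ^ 2 = 2 * (α * β) * t := by
    rw [← inner_self_eq_norm_sq (𝕜 := 𝕜)]
    conv_lhs => enter [2, 2]; rw [show v = (β : 𝕜) • u + (α : 𝕜) • w from rfl]
    rw [inner_add_right, inner_smul_right, inner_smul_right, map_add, re_ofReal_mul,
      re_ofReal_mul, hvu, hvw]
    ring
  have hPv : t ≤ ‖P v‖ := by
    refine le_of_mul_le_mul_right ?_ hβ
    calc t * β = re ⟪P v, w⟫_𝕜 := by rw [hP.inner_apply_left, hw, hvw, mul_comm]
      _ ≤ ‖P v‖ * β := re_inner_le_norm _ _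
  have hQv : t ≤ ‖Q v‖ := by
    refine le_of_mul_le_mul_right ?_ hα
    calc t * α = re ⟪Q v, u⟫_𝕜 := by rw [hQ.inner_apply_left, hu, hvu, mul_comm]
      _ ≤ ‖Q v‖ * α := re_inner_le_norm _ _
  have hrayleigh : ‖P v‖ ^ 2 + ‖Q v‖ ^ 2 ≤ ‖P + Q‖ * ‖v‖ ^ 2 := by
    rw [← hP.re_inner_apply_self, ← hQ.re_inner_apply_self, ← map_add, ← inner_add_left]
    exact (P + Q).re_inner_apply_self_le v
  rw [hvv] at hrayleigh
  nlinarith [mul_le_mul hPv hPv ht.le (ht.le.trans hPv), mul_le_mul hQv hQv ht.le (ht.le.trans hQv)]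

theorem one_le_norm_add (hP : IsStarProjection P) (hQ : IsStarProjection Q) (hQ0 : Q ≠ 0) :
    1 ≤ ‖P + Q‖ := by
  obtain ⟨x, hx⟩ : ∃ x, Q x ≠ 0 := by
    by_contra! h
    exact hQ0 (ContinuousLinearMap.ext h)
  refine le_of_mul_le_mul_right ?_ (by positivity : 0 < ‖Q x‖ ^ 2)
  calc 1 * ‖Q x‖ ^ 2 ≤ ‖P (Q x)‖ ^ 2 + ‖Q (Q x)‖ ^ 2 := by
        rw [hQ.apply_apply, one_mul]; exact le_add_of_nonneg_left (sq_nonneg _)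
    _ = re ⟪(P + Q) (Q x), Q x⟫_𝕜 := by
      rw [add_apply, inner_add_left, map_add, hP.re_inner_apply_self, hQ.re_inner_apply_self]
    _ ≤ ‖P + Q‖ * ‖Q x‖ ^ 2 := (P + Q).re_inner_apply_self_le _

theorem one_add_norm_comp_le_norm_add (hP : IsStarProjection P) (hQ : IsStarProjection Q)
    (hQ0 : Q ≠ 0) : 1 + ‖P ∘L Q‖ ≤ ‖P + Q‖ := by
  have h1 := hP.one_le_norm_add hQ hQ0
  suffices ‖P ∘L Q‖ ≤ ‖P + Q‖ - 1 by linarith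
  refine (P ∘L Q).opNorm_le_bound (by linarith) fun x ↦ ?_
  set y := Q x
  have hy : ‖y‖ ≤ ‖x‖ := (Q.le_of_opNorm_le (IsStarProjection.norm_le Q hQ) x).trans_eq (one_mul _)
  show ‖P y‖ ≤ (‖P + Q‖ - 1) * ‖x‖
  rcases (norm_nonneg (P y)).eq_or_lt with h0 | hpos
  · rw [← h0]; exact mul_nonneg (by linarith) (norm_nonneg x)
  have key := hP.norm_mul_norm_add_re_inner_le hQ (hQ.apply_apply x) (hP.apply_apply y)
  rw [inner_re_symm, hP.re_inner_apply_self] at key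
  have hPy : ‖P y‖ ≤ (‖P + Q‖ - 1) * ‖y‖ :=
    le_of_mul_le_mul_right (by linear_combination key) hpos
  exact hPy.trans (by gcongr)

end IsStarProjection

theorem stmt_0_general (r : ℕ)
    (P₀ P₁ : EuclideanSpace ℂ (Fin r) →L[ℂ] EuclideanSpace ℂ (Fin r))
    (h₁ : P₁ ≠ 0)
    (hsa₀ : IsSelfAdjoint P₀) (hsa₁ : IsSelfAdjoint P₁)
    (hp₀ : P₀ ∘L P₀ = P₀) (hp₁ : P₁ ∘L P₁ = P₁) :
    ‖P₀ + P₁‖ = 1 + ‖P₀ ∘L P₁‖ := by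
  have hP₀ : IsStarProjection P₀ := ⟨hp₀, hsa₀⟩
  have hP₁ : IsStarProjection P₁ := ⟨hp₁, hsa₁⟩
  exact le_antisymm (hP₀.norm_add_le_one_add_norm_comp hP₁)
    (hP₀.one_add_norm_comp_le_norm_add hP₁ h₁)

/-- For any two nonzero orthogonal projection operators `P₀` and `P₁` on `ℂ^r`, the
operator norm of their sum equals `1` plus the operator norm of their product. -/
theorem stmt_0 (r : ℕ)
    (P₀ P₁ : EuclideanSpace ℂ (Fin r) →L[ℂ] EuclideanSpace ℂ (Fin r))
    (h₀ : P₀ ≠ 0) (h₁ : P₁ ≠ 0)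
    (hsa₀ : IsSelfAdjoint P₀) (hsa₁ : IsSelfAdjoint P₁)
    (hp₀ : P₀ ∘L P₀ = P₀) (hp₁ : P₁ ∘L P₁ = P₁) :
    ‖P₀ + P₁‖ = 1 + ‖P₀ ∘L P₁‖ :=
  stmt_0_general r P₀ P₁ h₁ hsa₀ hsa₁ hp₀ hp₁
end

section
/- For any two unit vectors u₀, u₁ in ℂ^r, the operator norm of u₀u₀* + u₁u₁* equals 1 + |⟨u₀, u₁⟩|. -/
/-!
For `w` with `a = ⟪u₀, w⟫`, `b = ⟪u₁, w⟫` and `c = ⟪u₀, u₁⟫`, the operator sends `w` to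
`a • u₀ + b • u₁`. Expanding, `‖a • u₀ + b • u₁‖² ≤ (|a|² + |b|²)(1 + |c|)`, while
`|a|² + |b|² = re ⟪w, a • u₀ + b • u₁⟫ ≤ ‖w‖ ‖a • u₀ + b • u₁‖`; together they bound the norm
by `1 + |c|`. Conversely, for a unit scalar `α` with `α c = |c|`, the vector `u₀ + α • u₁` is an
eigenvector with eigenvalue `1 + |c|`.
-/

open scoped InnerProductSpace

/-- The rank-one operator `u u*` on `ℂ^r`, sending `v` to `⟪u, v⟫ • u`. -/
noncomputable def outer {r : ℕ} (u : EuclideanSpace ℂ (Fin r)) :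
    EuclideanSpace ℂ (Fin r) →L[ℂ] EuclideanSpace ℂ (Fin r) :=
  (innerSL ℂ u).smulRight u

lemma ContinuousLinearMap.norm_le_opNorm_of_apply_eq_smul {𝕜 E : Type*}
    [NontriviallyNormedField 𝕜] [NormedAddCommGroup E] [NormedSpace 𝕜 E] (T : E →L[𝕜] E)
    {v : E} (hv : v ≠ 0) {μ : 𝕜} (hTv : T v = μ • v) : ‖μ‖ ≤ ‖T‖ := by
  have h := T.le_opNorm v
  rw [hTv, norm_smul] at h
  exact le_of_mul_le_mul_right h (norm_pos_iff.mpr hv)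

section InnerProductSpace

variable {𝕜 E : Type*} [RCLike 𝕜] [NormedAddCommGroup E] [InnerProductSpace 𝕜 E]

lemma norm_smul_add_smul_sq_le {u₀ u₁ : E} (h₀ : ‖u₀‖ = 1) (h₁ : ‖u₁‖ = 1) (a b : 𝕜) :
    ‖a • u₀ + b • u₁‖ ^ 2 ≤ (‖a‖ ^ 2 + ‖b‖ ^ 2) * (1 + ‖⟪u₀, u₁⟫_𝕜‖) := by
  have hcross : RCLike.re ⟪a • u₀, b • u₁⟫_𝕜 ≤ ‖a‖ * ‖b‖ * ‖⟪u₀, u₁⟫_𝕜‖ :=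
    calc RCLike.re ⟪a • u₀, b • u₁⟫_𝕜 ≤ ‖⟪a • u₀, b • u₁⟫_𝕜‖ := RCLike.re_le_norm _
      _ = ‖a‖ * ‖b‖ * ‖⟪u₀, u₁⟫_𝕜‖ := by
        rw [inner_smul_left, inner_smul_right, norm_mul, norm_mul, RCLike.norm_conj, mul_assoc]
  rw [@norm_add_sq 𝕜, norm_smul, norm_smul, h₀, h₁]
  nlinarith [sq_nonneg (‖a‖ - ‖b‖), norm_nonneg a, norm_nonneg b, norm_nonneg ⟪u₀, u₁⟫_𝕜]

lemma norm_inner_sq_add_norm_inner_sq_le (u₀ u₁ w : E) :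
    ‖⟪u₀, w⟫_𝕜‖ ^ 2 + ‖⟪u₁, w⟫_𝕜‖ ^ 2 ≤ ‖w‖ * ‖⟪u₀, w⟫_𝕜 • u₀ + ⟪u₁, w⟫_𝕜 • u₁‖ := by
  have hre : RCLike.re ⟪w, ⟪u₀, w⟫_𝕜 • u₀ + ⟪u₁, w⟫_𝕜 • u₁⟫_𝕜 =
      ‖⟪u₀, w⟫_𝕜‖ ^ 2 + ‖⟪u₁, w⟫_𝕜‖ ^ 2 := by
    rw [inner_add_right, inner_smul_right, inner_smul_right, ← inner_conj_symm w u₀,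
      ← inner_conj_symm w u₁, RCLike.mul_conj, RCLike.mul_conj, map_add]
    simp only [← RCLike.ofReal_pow, RCLike.ofReal_re]
  calc ‖⟪u₀, w⟫_𝕜‖ ^ 2 + ‖⟪u₁, w⟫_𝕜‖ ^ 2
      = RCLike.re ⟪w, ⟪u₀, w⟫_𝕜 • u₀ + ⟪u₁, w⟫_𝕜 • u₁⟫_𝕜 := hre.symm
    _ ≤ ‖⟪w, ⟪u₀, w⟫_𝕜 • u₀ + ⟪u₁, w⟫_𝕜 • u₁⟫_𝕜‖ := RCLike.re_le_norm _
    _ ≤ ‖w‖ * ‖⟪u₀, w⟫_𝕜 • u₀ + ⟪u₁, w⟫_𝕜 • u₁‖ := norm_inner_le_norm _ _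

lemma norm_inner_smul_add_inner_smul_le {u₀ u₁ : E} (h₀ : ‖u₀‖ = 1) (h₁ : ‖u₁‖ = 1) (w : E) :
    ‖⟪u₀, w⟫_𝕜 • u₀ + ⟪u₁, w⟫_𝕜 • u₁‖ ≤ (1 + ‖⟪u₀, u₁⟫_𝕜‖) * ‖w‖ := by
  set N := ‖⟪u₀, w⟫_𝕜 • u₀ + ⟪u₁, w⟫_𝕜 • u₁‖
  have hsq : N ^ 2 ≤ (1 + ‖⟪u₀, u₁⟫_𝕜‖) * ‖w‖ * N :=
    calc N ^ 2 ≤ (‖⟪u₀, w⟫_𝕜‖ ^ 2 + ‖⟪u₁, w⟫_𝕜‖ ^ 2) * (1 + ‖⟪u₀, u₁⟫_𝕜‖) :=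
          norm_smul_add_smul_sq_le h₀ h₁ _ _
      _ ≤ ‖w‖ * N * (1 + ‖⟪u₀, u₁⟫_𝕜‖) := by
          gcongr
          exact norm_inner_sq_add_norm_inner_sq_le u₀ u₁ w
      _ = (1 + ‖⟪u₀, u₁⟫_𝕜‖) * ‖w‖ * N := by ring
  have hN : 0 ≤ N := norm_nonneg _
  have hK : 0 ≤ (1 + ‖⟪u₀, u₁⟫_𝕜‖) * ‖w‖ := by positivity
  nlinarith

lemma exists_ne_zero_inner_smul_add_inner_smul_eq {u₀ u₁ : E} (h₀ : ‖u₀‖ = 1)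
    (h₁ : ‖u₁‖ = 1) :
    ∃ v ≠ 0, ⟪u₀, v⟫_𝕜 • u₀ + ⟪u₁, v⟫_𝕜 • u₁ = ((1 + ‖⟪u₀, u₁⟫_𝕜‖ : ℝ) : 𝕜) • v := by
  set c := ⟪u₀, u₁⟫_𝕜
  obtain ⟨α, hα, hαc⟩ := RCLike.exists_norm_eq_mul_self c
  have hc : c = starRingEnd 𝕜 α * ‖c‖ := by
    rw [hαc, ← mul_assoc, RCLike.conj_mul, hα]
    simp
  have hcα : starRingEnd 𝕜 c = α * ‖c‖ := by
    simpa using congrArg (starRingEnd 𝕜) hc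
  have hv₀ : ⟪u₀, u₀ + α • u₁⟫_𝕜 = ((1 + ‖c‖ : ℝ) : 𝕜) := by
    rw [inner_add_right, inner_smul_right, ← hαc, inner_self_eq_norm_sq_to_K, h₀]
    push_cast
    ring
  have hv₁ : ⟪u₁, u₀ + α • u₁⟫_𝕜 = α * ((1 + ‖c‖ : ℝ) : 𝕜) := by
    rw [inner_add_right, inner_smul_right, ← inner_conj_symm, hcα, inner_self_eq_norm_sq_to_K,
      h₁]
    push_cast
    ring
  refine ⟨u₀ + α • u₁, fun hv ↦ ?_, ?_⟩
  · rw [hv, inner_zero_right] at hv₀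
    have : (0 : ℝ) = 1 + ‖c‖ := by exact_mod_cast hv₀
    linarith [norm_nonneg c]
  · rw [hv₀, hv₁, smul_add, smul_smul, mul_comm]

end InnerProductSpace

/-- For unit vectors `u₀, u₁` in `ℂ^r`, the operator norm of `u₀u₀* + u₁u₁*`
equals `1 + |⟨u₀, u₁⟩|`. -/
theorem stmt_1 (r : ℕ) (u₀ u₁ : EuclideanSpace ℂ (Fin r))
    (h₀ : ‖u₀‖ = 1) (h₁ : ‖u₁‖ = 1) :
    ‖outer u₀ + outer u₁‖ = 1 + ‖⟪u₀, u₁⟫_ℂ‖ := by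
  have happly : ∀ w, (outer u₀ + outer u₁) w = ⟪u₀, w⟫_ℂ • u₀ + ⟪u₁, w⟫_ℂ • u₁ := fun _ ↦ rfl
  refine le_antisymm (ContinuousLinearMap.opNorm_le_bound _ (by positivity) fun w ↦ ?_) ?_
  · rw [happly]
    exact norm_inner_smul_add_inner_smul_le h₀ h₁ w
  · obtain ⟨v, hv, hTv⟩ := exists_ne_zero_inner_smul_add_inner_smul_eq (𝕜 := ℂ) h₀ h₁
    rw [← happly] at hTv
    have h := (outer u₀ + outer u₁).norm_le_opNorm_of_apply_eq_smul hv hTv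
    rwa [RCLike.norm_ofReal, abs_of_nonneg (by positivity)] at h
end

section
/- For the BB84 monogamy-of-entanglement game, the unentangled value equals cos²(π/8): max over functions f : {0,1} → {0,1} of ‖(1/2)R(f(0)|0) + (1/2)R(f(1)|1)‖ = cos²(π/8), where R(0|0) = e₀e₀*, R(1|0) = e₁e₁*, R(0|1) = e₊e₊*, R(1|1) = e₋e₋*. -/
/-!
Writing `Z = diag(1, -1)` and `X` for the swap matrix, `R(a|0) = (1 + (-1)^a Z)/2` and
`R(b|1) = (1 + (-1)^b X)/2`, so for every answer function the game operator is
`1/2 + (√2/4) N` with `N = ((-1)^a Z + (-1)^b X)/√2` a reflection: a Hermitian involution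
other than `-1`. Such an `N` has norm `1` and the eigenvalue `1`, so the operator has norm
`1/2 + √2/4 = cos²(π/8)` for each of the four answer functions.
-/

open Matrix

/-- The operator (spectral) norm of a square complex matrix. -/
noncomputable def opNorm {n : Type*} [Fintype n] [DecidableEq n] (A : Matrix n n ℂ) : ℝ :=
  ‖Matrix.toEuclideanCLM (𝕜 := ℂ) A‖

/-- The referee's measurements for the BB84 monogamy-of-entanglement game:
`R a x` is the projection for answer `a` on question `x`. -/
noncomputable def bb84R (a x : Fin 2) : Matrix (Fin 2) (Fin 2) ℂ :=
  if x = 0 then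
    (if a = 0 then !![1, 0; 0, 0] else !![0, 0; 0, 1])
  else
    (if a = 0 then !![1/2, 1/2; 1/2, 1/2] else !![1/2, -(1/2); -(1/2), 1/2])

theorem norm_smul_one_add_smul_of_involution {𝕜 A : Type*} [RCLike 𝕜] [NormedRing A]
    [StarRing A] [CStarRing A] [Nontrivial A] [NormedAlgebra 𝕜 A] {N : A}
    (hN : IsSelfAdjoint N) (hNN : N * N = 1) (hN₁ : N ≠ -1) {a b : ℝ} (ha : 0 ≤ a)
    (hb : 0 ≤ b) : ‖(a : 𝕜) • (1 : A) + (b : 𝕜) • N‖ = a + b := by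
  have hN_unitary : N ∈ unitary A := by
    rw [Unitary.mem_iff, hN.star_eq]
    exact ⟨hNN, hNN⟩
  have hN_norm : ‖N‖ = 1 := CStarRing.norm_of_mem_unitary hN_unitary
  refine le_antisymm ?_ ?_
  · calc ‖(a : 𝕜) • (1 : A) + (b : 𝕜) • N‖ ≤ ‖(a : 𝕜) • (1 : A)‖ + ‖(b : 𝕜) • N‖ :=
          norm_add_le _ _
      _ = a + b := by
          rw [norm_smul, norm_smul, norm_one, hN_norm, RCLike.norm_ofReal, RCLike.norm_ofReal,
            abs_of_nonneg ha, abs_of_nonneg hb, mul_one, mul_one]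
  · -- `N * (1 + N) = 1 + N`, so `1 + N ≠ 0` is an eigenvector for the eigenvalue `a + b`.
    set P := 1 + N
    have hP : 0 < ‖P‖ := norm_pos_iff.mpr fun h => hN₁ (eq_neg_of_add_eq_zero_right h)
    have hP_eigen : ((a : 𝕜) • (1 : A) + (b : 𝕜) • N) * P = ((a + b : ℝ) : 𝕜) • P := by
      simp only [P, add_mul, mul_add, smul_mul_assoc, one_mul, mul_one, hNN, RCLike.ofReal_add,
        add_smul, smul_add]
      abel
    have h := norm_mul_le ((a : 𝕜) • (1 : A) + (b : 𝕜) • N) P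
    rw [hP_eigen, norm_smul, RCLike.norm_ofReal, abs_of_nonneg (add_nonneg ha hb)] at h
    exact le_of_mul_le_mul_right h hP

theorem opNorm_smul_one_add_smul_of_involution {n : Type*} [Fintype n] [DecidableEq n]
    [Nonempty n] {N : Matrix n n ℂ} (hN : N.IsHermitian) (hNN : N * N = 1) (hN₁ : N ≠ -1)
    {a b : ℝ} (ha : 0 ≤ a) (hb : 0 ≤ b) : opNorm ((a : ℂ) • 1 + (b : ℂ) • N) = a + b := by
  rw [opNorm, map_add, map_smul, map_smul, map_one]
  refine norm_smul_one_add_smul_of_involution (hN.isSelfAdjoint.map _) ?_ ?_ ha hb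
  · rw [← map_mul, hNN, map_one]
  · rw [← map_one (toEuclideanCLM (𝕜 := ℂ) (n := n)), ← map_neg]
    exact toEuclideanCLM.injective.ne hN₁

def reflection (s t : ℝ) : Matrix (Fin 2) (Fin 2) ℂ := !![(s : ℂ), t; t, -s]

theorem reflection_isHermitian (s t : ℝ) : (reflection s t).IsHermitian := by
  ext i j; fin_cases i <;> fin_cases j <;> simp [reflection]

theorem reflection_mul_self (s t : ℝ) :
    reflection s t * reflection s t = ((s ^ 2 + t ^ 2 : ℝ) : ℂ) • 1 := by
  ext i j; fin_cases i <;> fin_cases j <;> simp [reflection] <;> ring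

theorem reflection_ne_neg_one (s t : ℝ) : reflection s t ≠ -1 := by
  intro h
  have h_trace := congrArg trace h
  norm_num [reflection, trace_fin_two] at h_trace

theorem half_smul_bb84R_add (a b : Fin 2) :
    (1 / 2 : ℂ) • bb84R a 0 + (1 / 2 : ℂ) • bb84R b 1 =
      ((1 / 2 : ℝ) : ℂ) • 1 +
        ((√2 / 4 : ℝ) : ℂ) • reflection ((-1) ^ (a : ℕ) / √2) ((-1) ^ (b : ℕ) / √2) := by
  fin_cases a <;> fin_cases b <;> ext i j <;> fin_cases i <;> fin_cases j <;>
    simp [bb84R, reflection] <;> field_simp <;> norm_num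

theorem opNorm_half_smul_bb84R_add (a b : Fin 2) :
    opNorm ((1 / 2 : ℂ) • bb84R a 0 + (1 / 2 : ℂ) • bb84R b 1) = 1 / 2 + √2 / 4 := by
  rw [half_smul_bb84R_add]
  refine opNorm_smul_one_add_smul_of_involution (reflection_isHermitian _ _) ?_
    (reflection_ne_neg_one _ _) (by norm_num) (by positivity)
  have h_sq (c : Fin 2) : ((-1 : ℝ) ^ (c : ℕ) / √2) ^ 2 = 1 / 2 := by
    rw [div_pow, ← pow_mul, mul_comm, pow_mul, neg_one_sq, one_pow, Real.sq_sqrt zero_le_two]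
  rw [reflection_mul_self, h_sq, h_sq]
  norm_num

theorem cos_pi_div_eight_sq : Real.cos (Real.pi / 8) ^ 2 = 1 / 2 + √2 / 4 := by
  rw [Real.cos_sq, show 2 * (Real.pi / 8) = Real.pi / 4 by ring, Real.cos_pi_div_four]
  ring

/-- The unentangled value of the BB84 monogamy-of-entanglement game equals `cos²(π/8)`:
the maximum over answer functions `f : {0,1} → {0,1}` of
`‖(1/2)R(f(0)|0) + (1/2)R(f(1)|1)‖` is `cos²(π/8)`. -/
theorem stmt_13 :
    (⨆ f : Fin 2 → Fin 2,
        opNorm ((1 / 2 : ℂ) • bb84R (f 0) 0 + (1 / 2 : ℂ) • bb84R (f 1) 1))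
      = Real.cos (Real.pi / 8) ^ 2 := by
  simp only [opNorm_half_smul_bb84R_add, ciSup_const, cos_pi_div_eight_sq]
end
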